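/- Suppose j, n, m ≥ 3 and n + m - 4 = (j-1)s where j, s, n are all odd. Then m_j(S_n, S_m) = ⌈(n+m-4)/(j-1)⌉ = s. -/

import Mathlib

/-- The complete balanced multipartite graph `K_{j×s}` on `Fin j × Fin s`:
vertices are adjacent iff they lie in different parts (different first coordinate). -/
def multiK (j s : ℕ) : SimpleGraph (Fin j × Fin s) where
  Adj u v := u.1 ≠ v.1
  symm := ⟨fun _ _ h => h.symm⟩
  loopless := ⟨fun _ h => h rfl⟩

/-- Degree of a vertex, via `Set.ncard` of its neighbor set. -/
noncomputable def mdeg {V : Type*} (G : SimpleGraph V) (v : V) : ℕ :=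
  (G.neighborSet v).ncard

/-- `K_{j×s} → (S_n, S_m)`: every red/blue edge coloring (red subgraph `R ≤ K_{j×s}`,
blue the rest) contains a red `K_{1,n-1}` or a blue `K_{1,m-1}`. -/
def Arrows (j s n m : ℕ) : Prop :=
  ∀ R : SimpleGraph (Fin j × Fin s), R ≤ multiK j s →
    (∃ v, n - 1 ≤ mdeg R v) ∨ (∃ v, m - 1 ≤ mdeg (multiK j s \ R) v)

/-- The size Ramsey multipartite number `m_j(S_n, S_m)`. -/
noncomputable def mj (j n m : ℕ) : ℕ := sInf {s | Arrows j s n m}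

/-!
Upper bound: if a colouring of `K_{j×s}` had no red `S_n` and no blue `S_m`, every vertex would
have red degree at most `n - 2` and blue degree at most `m - 2`; since the two add up to
`(j - 1) s = n + m - 4`, the red graph would be `(n - 2)`-regular. But it has `j s` vertices,
an odd number, all of odd degree, contradicting the handshake lemma.

Lower bound: for `t < s`, view `K_{j×t}` as the Cayley graph of `ℤ/j × ℤ/t` on the elements
with nonzero first coordinate. Because `j` is odd these come in pairs `{x, -x}`, so any even
`d ≤ (j - 1) t` is the size of a symmetric subset, whose circulant graph is a `d`-regular red
graph. Taking `d = min ((j - 1) t) (n - 3)` avoids both stars.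
-/

open SimpleGraph Finset

lemma mdeg_eq_degree {V : Type*} [Fintype V] (G : SimpleGraph V) [DecidableRel G.Adj] (v : V) :
    mdeg G v = G.degree v := by
  rw [mdeg, degree, neighborFinset_def, ← Set.ncard_coe_finset, Set.coe_toFinset]

lemma mdeg_add_mdeg_sdiff {V : Type*} [Finite V] {R K : SimpleGraph V} (h : R ≤ K) (v : V) :
    mdeg R v + mdeg (K \ R) v = mdeg K v := by
  have hsub : R.neighborSet v ⊆ K.neighborSet v := fun _ hu => h hu
  have hdiff : (K \ R).neighborSet v = K.neighborSet v \ R.neighborSet v :=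
    Set.ext fun _ => Iff.rfl
  rw [mdeg, mdeg, mdeg, hdiff, add_comm]
  exact Set.ncard_sdiff_add_ncard_of_subset hsub (Set.toFinite _)

lemma mdeg_multiK {j t : ℕ} (v : Fin j × Fin t) : mdeg (multiK j t) v = (j - 1) * t := by
  classical
  have hnbr : (multiK j t).neighborSet v =
      ↑(({v.1}ᶜ : Finset (Fin j)) ×ˢ (univ : Finset (Fin t))) := by
    ext u
    simp [multiK, eq_comm]
  rw [mdeg, hnbr, Set.ncard_coe_finset, card_product, card_compl, card_singleton, card_univ,
    Fintype.card_fin, Fintype.card_fin]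

lemma exists_even_mdeg_of_odd_card {V : Type*} [Fintype V] (hV : Odd (Fintype.card V))
    (G : SimpleGraph V) : ∃ v, Even (mdeg G v) := by
  classical
  by_contra! hodd
  have hall : ({v | Odd (G.degree v)} : Finset V) = univ :=
    eq_univ_of_forall fun v => by simpa [← mdeg_eq_degree] using hodd v
  have := G.even_card_odd_degree_vertices
  rw [hall, card_univ, ← Nat.not_odd_iff_even] at this
  exact this hV

theorem arrows_of_odd {j n m s : ℕ} (hn : 3 ≤ n) (heq : n + m - 4 = (j - 1) * s) (hj : Odd j)
    (hs : Odd s) (hno : Odd n) : Arrows j s n m := by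
  intro R hR
  by_contra! hnone
  obtain ⟨hred, hblue⟩ := hnone
  have hreg : ∀ v, mdeg R v = n - 2 := fun v => by
    have := mdeg_add_mdeg_sdiff hR v
    have := hred v
    have := hblue v
    rw [mdeg_multiK, ← heq] at *
    omega
  obtain ⟨v, hv⟩ := exists_even_mdeg_of_odd_card (by simpa using hj.mul hs) R
  rw [hreg, ← Nat.not_odd_iff_even] at hv
  exact hv (Nat.Odd.sub_even (by omega) hno even_two)

lemma exists_neg_closed_subset_card {α : Type*} [DecidableEq α] [InvolutiveNeg α] {A : Finset α}
    (hA : ∀ x ∈ A, -x ∈ A) (hfix : ∀ x ∈ A, -x ≠ x) :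
    ∀ e, 2 * e ≤ #A → ∃ S ⊆ A, #S = 2 * e ∧ ∀ x ∈ S, -x ∈ S
  | 0, _ => ⟨∅, empty_subset _, rfl, by simp⟩
  | e + 1, he => by
    obtain ⟨S, hSA, hS, hSneg⟩ := exists_neg_closed_subset_card hA hfix e (by omega)
    obtain ⟨x, hxA, hxS⟩ := exists_mem_notMem_of_card_lt_card (s := S) (t := A) (by omega)
    have hnegS : -x ∉ S := fun h => hxS (by simpa using hSneg _ h)
    refine ⟨insert (-x) (insert x S), ?_, ?_, ?_⟩
    · simp [insert_subset_iff, hA x hxA, hxA, hSA]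
    · rw [card_insert_of_notMem (by simp [hfix x hxA, hnegS]), card_insert_of_notMem hxS, hS]
      ring
    · simp only [mem_insert]
      rintro y (rfl | rfl | hy) <;> simp [*]

lemma neg_ne_self_of_odd {j : ℕ} [NeZero j] (hj : Odd j) {a : Fin j} (ha : a ≠ 0) :
    -a ≠ a := by
  intro h
  have hdvd : j ∣ 2 * a.val := by
    have := congrArg Fin.val (neg_eq_iff_add_eq_zero.mp h)
    rw [Fin.val_add, Fin.val_zero, ← two_mul] at this
    exact Nat.dvd_of_mod_eq_zero this
  have ha0 := Nat.eq_zero_of_dvd_of_lt ((Nat.coprime_two_right.2 hj).dvd_of_dvd_mul_left hdvd)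
    a.isLt
  exact ha (Fin.ext ha0)

lemma neighborSet_circulantGraph {G : Type*} [AddGroup G] {S : Set G} (hS : ∀ x ∈ S, -x ∈ S)
    (h0 : (0 : G) ∉ S) (v : G) : (circulantGraph S).neighborSet v = (· + v) '' S := by
  ext u
  simp only [mem_neighborSet, circulantGraph_adj, Set.mem_image]
  constructor
  · rintro ⟨-, hvu | huv⟩
    · exact ⟨u - v, by simpa using hS _ hvu, sub_add_cancel u v⟩
    · exact ⟨u - v, huv, sub_add_cancel u v⟩
  · rintro ⟨x, hx, rfl⟩
    refine ⟨fun h => h0 ?_, Or.inr (by simpa using hx)⟩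
    have hx0 : x = 0 := by simpa using h.symm
    exact hx0 ▸ hx

lemma mdeg_circulantGraph {G : Type*} [AddGroup G] {S : Set G} (hS : ∀ x ∈ S, -x ∈ S)
    (h0 : (0 : G) ∉ S) (v : G) : mdeg (circulantGraph S) v = S.ncard := by
  rw [mdeg, neighborSet_circulantGraph hS h0,
    Set.ncard_image_of_injective _ (add_left_injective v)]

theorem exists_regular_le_multiK {j t d : ℕ} (hj : Odd j) (hd : Even d)
    (hdt : d ≤ (j - 1) * t) :
    ∃ R ≤ multiK j t, ∀ v, mdeg R v = d := by
  classical
  rcases Nat.eq_zero_or_pos t with rfl | ht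
  · exact ⟨⊥, bot_le, fun v => v.2.elim0⟩
  have : NeZero j := ⟨hj.pos.ne'⟩
  have : NeZero t := ⟨ht.ne'⟩
  set A : Finset (Fin j × Fin t) := ({0}ᶜ : Finset (Fin j)) ×ˢ univ
  have hAcard : #A = (j - 1) * t := by simp [A, card_compl]
  have hA : ∀ x ∈ A, x.1 ≠ 0 := by simp [A]
  obtain ⟨e, rfl⟩ := hd
  obtain ⟨S, hSA, hS, hSneg⟩ := exists_neg_closed_subset_card (A := A) (by simp [A])
    (fun x hx h => neg_ne_self_of_odd hj (hA x hx) (congrArg Prod.fst h)) e (by omega)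
  refine ⟨circulantGraph (S : Set (Fin j × Fin t)), fun u v huv => ?_, fun v => ?_⟩
  · rw [circulantGraph_adj] at huv
    obtain ⟨-, h | h⟩ := huv <;> exact fun he => hA _ (hSA h) (by simp [he])
  · rw [mdeg_circulantGraph (by simpa using hSneg) (fun h => hA 0 (hSA h) rfl),
      Set.ncard_coe_finset, hS, two_mul]

theorem not_arrows_of_mul_lt {j n m t : ℕ} (hn : 3 ≤ n) (hm : 2 ≤ m) (hj : Odd j)
    (hno : Odd n) (hlt : (j - 1) * t < n + m - 4) : ¬ Arrows j t n m := by
  set d := min ((j - 1) * t) (n - 3)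
  have hd : Even d := by
    rcases min_choice ((j - 1) * t) (n - 3) with h | h <;> rw [show d = _ from h]
    · exact (Nat.Odd.sub_odd hj odd_one).mul_right t
    · exact Nat.Odd.sub_odd hno (by decide)
  obtain ⟨R, hR, hreg⟩ := exists_regular_le_multiK hj hd (min_le_left _ _)
  intro hA
  rcases hA R hR with ⟨v, hv⟩ | ⟨v, hv⟩
  · rw [hreg] at hv
    omega
  · have hsum := mdeg_add_mdeg_sdiff hR v
    rw [hreg, mdeg_multiK] at hsum
    omega

theorem stmt13 (j n m s : ℕ) (hj : 3 ≤ j) (hn : 3 ≤ n) (hm : 3 ≤ m)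
    (heq : n + m - 4 = (j - 1) * s) (hjo : Odd j) (hso : Odd s) (hno : Odd n) :
    mj j n m = s ∧ (n + m - 4) ⌈/⌉ (j - 1) = s := by
  have hpos : 0 < j - 1 := by omega
  have hA : Arrows j s n m := arrows_of_odd hn heq hjo hso hno
  refine ⟨le_antisymm (Nat.sInf_le hA) (le_csInf ⟨s, hA⟩ fun t ht => ?_), ?_⟩
  · by_contra! hlt
    exact not_arrows_of_mul_lt hn (by omega) hjo hno
      (heq ▸ Nat.mul_lt_mul_of_pos_left hlt hpos) ht
  · rw [heq, ← smul_eq_mul, smul_ceilDiv hpos]
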